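/- Let H be a finite-dimensional complex inner product space and let P_E and P_O be orthogonal projections on H with P_E + P_O = 1. Let K := ℂ² ⊗ ℂ² with standard basis vectors e_i ⊗ e_j, and for a, b ∈ ℂ with |a|² + |b|² = 1 and |a| ≠ |b| let ω := a (e₀ ⊗ e₀) + b (e₁ ⊗ e₁) ∈ K. Define P'_E := P_E ⊗ |e₀⊗e₀⟩⟨e₀⊗e₀| + P_O ⊗ |e₁⊗e₁⟩⟨e₁⊗e₁| on H ⊗ K. Then for all unit vectors ψ, φ ∈ H with ⟪ψ, φ⟫ = 0 and ⟪P_E ψ, P_E φ⟫ ≠ 0, the vectors ψ' := ψ ⊗ ω and φ' := φ ⊗ ω satisfy ⟪P'_E ψ', P'_E φ'⟫ = (|a|² − |b|²) ⟪P_E ψ, P_E φ⟫ ≠ 0. -/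

import Mathlib

open Matrix
open scoped ComplexOrder Kronecker

/-- The trace norm `‖Y‖₁ = Tr √(Yᴴ Y)` of a complex matrix. -/
noncomputable def traceNorm {m : Type*} [Fintype m] [DecidableEq m]
    (Y : Matrix m m ℂ) : ℝ :=
  ((((Matrix.posSemidef_conjTranspose_mul_self Y).isHermitian.eigenvectorUnitary : Matrix m m ℂ) *
      diagonal (((↑) : ℝ → ℂ) ∘ Real.sqrt ∘ (Matrix.posSemidef_conjTranspose_mul_self Y).isHermitian.eigenvalues) *
      (star (Matrix.posSemidef_conjTranspose_mul_self Y).isHermitian.eigenvectorUnitary : Matrix m m ℂ))).trace.re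

/-- The inner product `⟪x, y⟫ = ∑ i, conj (x i) * y i` on `m → ℂ`. -/
noncomputable def cinner {m : Type*} [Fintype m] (x y : m → ℂ) : ℂ := star x ⬝ᵥ y

/-- An orthogonal projection: a self-adjoint idempotent matrix. -/
def IsOrthoProj {m : Type*} [Fintype m] (P : Matrix m m ℂ) : Prop :=
  P.IsHermitian ∧ P * P = P

/-- An effect: an operator `S` with `0 ≤ S ≤ 1`. -/
def IsEffect {m : Type*} [Fintype m] [DecidableEq m] (S : Matrix m m ℂ) : Prop :=
  S.PosSemidef ∧ (1 - S).PosSemidef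

/-- The rank-one operator `|ψ⟩⟨ψ|`. -/
noncomputable def outer {m : Type*} (ψ : m → ℂ) : Matrix m m ℂ :=
  Matrix.vecMulVec ψ (star ψ)

/-- The standard basis vector `e_i ⊗ e_j` of `ℂ² ⊗ ℂ²`. -/
noncomputable def e2 (i j : Fin 2) : Fin 2 × Fin 2 → ℂ := fun p => if p = (i, j) then 1 else 0

/-- The tensor product `ψ ⊗ ω` of a vector of `H` with a vector of `K = ℂ² ⊗ ℂ²`. -/
noncomputable def tensorVec {m : Type*} (ψ : m → ℂ) (ω : Fin 2 × Fin 2 → ℂ) :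
    m × (Fin 2 × Fin 2) → ℂ := fun p => ψ p.1 * ω p.2

/-!
On `χ ⊗ ω` the projector `P'_E` acts as `a (P_E χ) ⊗ e₀₀ + b (P_O χ) ⊗ e₁₁`. The two branches
are orthogonal in the ancilla, so `⟪P'_E ψ', P'_E φ'⟫ = |a|² ⟪P_E ψ, P_E φ⟫ + |b|² ⟪P_O ψ, P_O φ⟫`.
Since `P_E + P_O = 1` and `⟪ψ, φ⟫ = 0`, the `O` overlap is minus the `E` overlap, which leaves
`(|a|² - |b|²) ⟪P_E ψ, P_E φ⟫`; this vanishes only if `|a| = |b|`.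
-/

section Inner

variable {m : Type*} [Fintype m]

@[simp] lemma cinner_add_left (x y z : m → ℂ) : cinner (x + y) z = cinner x z + cinner y z := by
  simp [cinner, add_dotProduct]

@[simp] lemma cinner_add_right (x y z : m → ℂ) : cinner x (y + z) = cinner x y + cinner x z := by
  simp [cinner, dotProduct_add]

@[simp] lemma cinner_smul_left (c : ℂ) (x y : m → ℂ) :
    cinner (c • x) y = star c * cinner x y := by
  simp [cinner, smul_dotProduct]

@[simp] lemma cinner_smul_right (c : ℂ) (x y : m → ℂ) : cinner x (c • y) = c * cinner x y := by
  simp [cinner, dotProduct_smul]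

lemma outer_mulVec (u v : m → ℂ) : outer u *ᵥ v = cinner u v • u := by
  rw [outer, vecMulVec_mulVec, op_smul_eq_smul, cinner]

lemma IsOrthoProj.cinner_mulVec_mulVec {P : Matrix m m ℂ} (hP : IsOrthoProj P) (x y : m → ℂ) :
    cinner (P *ᵥ x) (P *ᵥ y) = cinner x (P *ᵥ y) := by
  rw [cinner, star_mulVec, ← dotProduct_mulVec, mulVec_mulVec, hP.1.eq, hP.2, cinner]

lemma IsOrthoProj.cinner_mulVec_mulVec_eq_neg [DecidableEq m] {P Q : Matrix m m ℂ}
    (hP : IsOrthoProj P) (hQ : IsOrthoProj Q) (hPQ : P + Q = 1) {x y : m → ℂ}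
    (hxy : cinner x y = 0) :
    cinner (Q *ᵥ x) (Q *ᵥ y) = -cinner (P *ᵥ x) (P *ᵥ y) := by
  have hy : P *ᵥ y + Q *ᵥ y = y := by rw [← add_mulVec, hPQ, one_mulVec]
  rw [hP.cinner_mulVec_mulVec, hQ.cinner_mulVec_mulVec, eq_neg_iff_add_eq_zero, add_comm,
    ← cinner_add_right, hy, hxy]

end Inner

lemma tensorVec_smul_right {m : Type*} (ψ : m → ℂ) (c : ℂ) (ω : Fin 2 × Fin 2 → ℂ) :
    tensorVec ψ (c • ω) = c • tensorVec ψ ω := by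
  ext p
  simp only [tensorVec, Pi.smul_apply, smul_eq_mul]
  ring

section Tensor

variable {m : Type*} [Fintype m]

lemma kronecker_mulVec_tensorVec (M : Matrix m m ℂ) (N : Matrix (Fin 2 × Fin 2) (Fin 2 × Fin 2) ℂ)
    (ψ : m → ℂ) (ω : Fin 2 × Fin 2 → ℂ) :
    (M ⊗ₖ N) *ᵥ tensorVec ψ ω = tensorVec (M *ᵥ ψ) (N *ᵥ ω) := by
  ext p
  simp only [mulVec, dotProduct, tensorVec, kroneckerMap_apply]
  rw [Finset.sum_mul_sum, ← Finset.sum_product', Finset.univ_product_univ]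
  exact Finset.sum_congr rfl fun q _ => by ring

lemma cinner_tensorVec (x y : m → ℂ) (u v : Fin 2 × Fin 2 → ℂ) :
    cinner (tensorVec x u) (tensorVec y v) = cinner x y * cinner u v := by
  simp only [cinner, dotProduct, tensorVec, Pi.star_apply, star_mul']
  rw [Finset.sum_mul_sum, ← Finset.sum_product', Finset.univ_product_univ]
  exact Finset.sum_congr rfl fun q _ => by ring

lemma cinner_e2_left (i j : Fin 2) (v : Fin 2 × Fin 2 → ℂ) : cinner (e2 i j) v = v (i, j) := by
  simp [cinner, dotProduct, e2, apply_ite]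

lemma kronecker_outer_mulVec_tensorVec (P Q : Matrix m m ℂ) (a b : ℂ) (χ : m → ℂ) :
    (P ⊗ₖ outer (e2 0 0) + Q ⊗ₖ outer (e2 1 1)) *ᵥ tensorVec χ (a • e2 0 0 + b • e2 1 1) =
      a • tensorVec (P *ᵥ χ) (e2 0 0) + b • tensorVec (Q *ᵥ χ) (e2 1 1) := by
  rw [add_mulVec, kronecker_mulVec_tensorVec, kronecker_mulVec_tensorVec, outer_mulVec,
    outer_mulVec, cinner_e2_left, cinner_e2_left, tensorVec_smul_right, tensorVec_smul_right]
  simp [e2]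

lemma cinner_kronecker_outer_mulVec_tensorVec (P Q : Matrix m m ℂ) (a b : ℂ) (ψ φ : m → ℂ) :
    cinner ((P ⊗ₖ outer (e2 0 0) + Q ⊗ₖ outer (e2 1 1)) *ᵥ tensorVec ψ (a • e2 0 0 + b • e2 1 1))
        ((P ⊗ₖ outer (e2 0 0) + Q ⊗ₖ outer (e2 1 1)) *ᵥ tensorVec φ (a • e2 0 0 + b • e2 1 1)) =
      Complex.normSq a * cinner (P *ᵥ ψ) (P *ᵥ φ) + Complex.normSq b * cinner (Q *ᵥ ψ) (Q *ᵥ φ) := by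
  simp only [kronecker_outer_mulVec_tensorVec, cinner_add_left, cinner_add_right,
    cinner_smul_left, cinner_smul_right, cinner_tensorVec, cinner_e2_left, e2, Prod.mk.injEq,
    Fin.reduceEq, and_self, if_true, if_false, Complex.normSq_eq_conj_mul_self,
    Complex.star_def]
  ring

lemma IsOrthoProj.cinner_kronecker_outer_mulVec_tensorVec_of_add_eq_one [DecidableEq m]
    {P Q : Matrix m m ℂ} (hP : IsOrthoProj P) (hQ : IsOrthoProj Q) (hPQ : P + Q = 1) {ψ φ : m → ℂ}
    (hψφ : cinner ψ φ = 0) (a b : ℂ) :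
    cinner ((P ⊗ₖ outer (e2 0 0) + Q ⊗ₖ outer (e2 1 1)) *ᵥ tensorVec ψ (a • e2 0 0 + b • e2 1 1))
        ((P ⊗ₖ outer (e2 0 0) + Q ⊗ₖ outer (e2 1 1)) *ᵥ tensorVec φ (a • e2 0 0 + b • e2 1 1)) =
      ((Complex.normSq a - Complex.normSq b : ℝ) : ℂ) * cinner (P *ᵥ ψ) (P *ᵥ φ) := by
  rw [cinner_kronecker_outer_mulVec_tensorVec, hP.cinner_mulVec_mulVec_eq_neg hQ hPQ hψφ]
  push_cast
  ring

end Tensor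

theorem non_maximally_entangled_ancilla_fails_general
    {n : ℕ} (P_E P_O : Matrix (Fin n) (Fin n) ℂ)
    (hPE : IsOrthoProj P_E) (hPO : IsOrthoProj P_O) (hsum : P_E + P_O = 1)
    (a b : ℂ)
    (hne : ‖a‖ ≠ ‖b‖)
    (ω : Fin 2 × Fin 2 → ℂ) (hω : ω = a • e2 0 0 + b • e2 1 1)
    (P'E : Matrix (Fin n × (Fin 2 × Fin 2)) (Fin n × (Fin 2 × Fin 2)) ℂ)
    (hP'E : P'E = P_E ⊗ₖ outer (e2 0 0) + P_O ⊗ₖ outer (e2 1 1))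
    (ψ φ : Fin n → ℂ)
    (horth : cinner ψ φ = 0)
    (hEne : cinner (P_E.mulVec ψ) (P_E.mulVec φ) ≠ 0) :
    cinner (P'E.mulVec (tensorVec ψ ω)) (P'E.mulVec (tensorVec φ ω)) =
      ((Complex.normSq a - Complex.normSq b : ℝ) : ℂ) *
        cinner (P_E.mulVec ψ) (P_E.mulVec φ) ∧
    cinner (P'E.mulVec (tensorVec ψ ω)) (P'E.mulVec (tensorVec φ ω)) ≠ 0 := by
  subst hω hP'E
  have key := hPE.cinner_kronecker_outer_mulVec_tensorVec_of_add_eq_one hPO hsum horth a b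
  have hnormSq : Complex.normSq a ≠ Complex.normSq b := by
    rwa [Complex.normSq_eq_norm_sq, Complex.normSq_eq_norm_sq, Ne,
      sq_eq_sq₀ (norm_nonneg a) (norm_nonneg b)]
  refine ⟨key, key ▸ mul_ne_zero ?_ hEne⟩
  exact Complex.ofReal_ne_zero.mpr (sub_ne_zero.mpr hnormSq)

/-- **Theorem 2, necessity.** With a non-maximally entangled ancilla (`|a| ≠ |b|`), the
`E` parts of `ψ ⊗ ω` and `φ ⊗ ω` remain non-orthogonal whenever `⟪ψ_E, φ_E⟫ ≠ 0`. -/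
theorem non_maximally_entangled_ancilla_fails
    {n : ℕ} (P_E P_O : Matrix (Fin n) (Fin n) ℂ)
    (hPE : IsOrthoProj P_E) (hPO : IsOrthoProj P_O) (hsum : P_E + P_O = 1)
    (a b : ℂ) (hab : Complex.normSq a + Complex.normSq b = 1)
    (hne : ‖a‖ ≠ ‖b‖)
    (ω : Fin 2 × Fin 2 → ℂ) (hω : ω = a • e2 0 0 + b • e2 1 1)
    (P'E : Matrix (Fin n × (Fin 2 × Fin 2)) (Fin n × (Fin 2 × Fin 2)) ℂ)
    (hP'E : P'E = P_E ⊗ₖ outer (e2 0 0) + P_O ⊗ₖ outer (e2 1 1))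
    (ψ φ : Fin n → ℂ) (hψ : cinner ψ ψ = 1) (hφ : cinner φ φ = 1)
    (horth : cinner ψ φ = 0)
    (hEne : cinner (P_E.mulVec ψ) (P_E.mulVec φ) ≠ 0) :
    cinner (P'E.mulVec (tensorVec ψ ω)) (P'E.mulVec (tensorVec φ ω)) =
      ((Complex.normSq a - Complex.normSq b : ℝ) : ℂ) *
        cinner (P_E.mulVec ψ) (P_E.mulVec φ) ∧
    cinner (P'E.mulVec (tensorVec ψ ω)) (P'E.mulVec (tensorVec φ ω)) ≠ 0 :=
  non_maximally_entangled_ancilla_fails_general P_E P_O hPE hPO hsum a b hne ω hω P'E hP'E ψ φ horth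
    hEne
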